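/- arXiv:2501.13856 — 3 statements merged into one kernel-verified Lean document; each statement's English description precedes it below -/
import Mathlib

section
/- Let K ⊂ ℝ^{2n} be a convex body with 0 ∈ int(K), and fix T > 0. Suppose γ₁, γ₂ : 𝕋 → ∂K are Lipschitz loops with γ̇₁(t) = γ̇₂(t) =: v_t a.e. and v_t ∈ T·J₀∂H_K(γ₁(t)) ∩ T·J₀∂H_K(γ₂(t)) a.e. Then for every α ∈ [0,1], the loop γ_α = αγ₁ + (1−α)γ₂ maps into ∂K and satisfies γ̇_α(t) ∈ T·J₀∂H_K(γ_α(t)) a.e. -/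
open Set Function MeasureTheory RealInnerProductSpace

/-- The convex-analysis subdifferential. -/
def subdiff {m : ℕ} (f : EuclideanSpace ℝ (Fin m) → ℝ) (x : EuclideanSpace ℝ (Fin m)) :
    Set (EuclideanSpace ℝ (Fin m)) :=
  {ξ | ∀ z, ⟪ξ, z - x⟫ ≤ f z - f x}


lemma subdiff_combo {m : ℕ} {f : EuclideanSpace ℝ (Fin m) → ℝ}
    (hf : ConvexOn ℝ Set.univ f) {x y ξ : EuclideanSpace ℝ (Fin m)}
    (hx : ξ ∈ subdiff f x) (hy : ξ ∈ subdiff f y) {α : ℝ} (h0 : 0 ≤ α) (h1 : α ≤ 1) :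
    f (α • x + (1 - α) • y) = α * f x + (1 - α) * f y ∧
      ξ ∈ subdiff f (α • x + (1 - α) • y) := by
  set w := α • x + (1 - α) • y with hw
  have h1' : 0 ≤ 1 - α := by linarith
  have hconv : f w ≤ α * f x + (1 - α) * f y := by
    have := hf.2 (Set.mem_univ x) (Set.mem_univ y) h0 h1' (by linarith)
    simpa [smul_eq_mul] using this
  have hxw := hx w
  have hyw := hy w
  have hkey : α * f x + (1 - α) * f y ≤ f w := by
    have e : α * ⟪ξ, w - x⟫ + (1 - α) * ⟪ξ, w - y⟫ = 0 := by
      have hz : α • (w - x) + (1 - α) • (w - y) = (0 : EuclideanSpace ℝ (Fin m)) := by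
        rw [hw]; module
      have h2 := congrArg (fun v => ⟪ξ, v⟫) hz
      simp only [inner_add_right, real_inner_smul_right, inner_zero_right] at h2
      exact h2
    nlinarith [mul_le_mul_of_nonneg_left hxw h0, mul_le_mul_of_nonneg_left hyw h1']
  have heq : f w = α * f x + (1 - α) * f y := le_antisymm hconv hkey
  refine ⟨heq, fun z => ?_⟩
  have hxz := hx z
  have hyz := hy z
  have e : ⟪ξ, z - w⟫ = α * ⟪ξ, z - x⟫ + (1 - α) * ⟪ξ, z - y⟫ := by
    have hz : α • (z - x) + (1 - α) • (z - y) = z - w := by rw [hw]; module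
    have h2 := congrArg (fun v => ⟪ξ, v⟫) hz
    simp only [inner_add_right, real_inner_smul_right] at h2
    exact h2.symm
  rw [e, heq]
  nlinarith [mul_le_mul_of_nonneg_left hxz h0, mul_le_mul_of_nonneg_left hyz h1']

/-- If two Lipschitz loops `γ₁, γ₂ : 𝕋 → ∂K` have the same derivative `g` a.e.,
with `g(t) ∈ T·J₀∂H_K(γ₁(t)) ∩ T·J₀∂H_K(γ₂(t))` a.e., then every convex combination
`γ_α = αγ₁ + (1−α)γ₂` maps into `∂K` and satisfies `γ̇_α(t) ∈ T·J₀∂H_K(γ_α(t))` a.e. -/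
theorem stmt_12 {n : ℕ} (K : Set (EuclideanSpace ℝ (Fin (2*n))))
    (hKconv : Convex ℝ K) (hKcomp : IsCompact K)
    (h0 : (0 : EuclideanSpace ℝ (Fin (2*n))) ∈ interior K)
    (H : EuclideanSpace ℝ (Fin (2*n)) → ℝ)
    (hHconv : ConvexOn ℝ univ H)
    (hhom : ∀ t : ℝ, 0 ≤ t → ∀ x, H (t • x) = t^2 * H x)
    (hlevel : H ⁻¹' {1} = frontier K)
    (J : EuclideanSpace ℝ (Fin (2*n)) →ₗ[ℝ] EuclideanSpace ℝ (Fin (2*n)))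
    (hJ2 : ∀ u, J (J u) = -u)
    (hJskew : ∀ u v, ⟪J u, v⟫ = -⟪u, J v⟫)
    (T : ℝ) (hT : 0 < T)
    (γ₁ γ₂ g : ℝ → EuclideanSpace ℝ (Fin (2*n)))
    (L₁ L₂ : NNReal) (hLip₁ : LipschitzWith L₁ γ₁) (hLip₂ : LipschitzWith L₂ γ₂)
    (hper₁ : Periodic γ₁ 1) (hper₂ : Periodic γ₂ 1)
    (hbd₁ : ∀ t, γ₁ t ∈ frontier K) (hbd₂ : ∀ t, γ₂ t ∈ frontier K)
    (hderiv : ∀ᵐ t : ℝ, HasDerivAt γ₁ (g t) t ∧ HasDerivAt γ₂ (g t) t)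
    (hmem : ∀ᵐ t : ℝ, (∃ ξ ∈ subdiff H (γ₁ t), g t = T • J ξ) ∧
      (∃ ξ ∈ subdiff H (γ₂ t), g t = T • J ξ))
    (α : ℝ) (hα : α ∈ Icc (0:ℝ) 1) :
    (∀ t, α • γ₁ t + (1 - α) • γ₂ t ∈ frontier K) ∧
    (∀ᵐ t : ℝ, HasDerivAt (fun s => α • γ₁ s + (1 - α) • γ₂ s) (g t) t ∧
      ∃ ξ ∈ subdiff H (α • γ₁ t + (1 - α) • γ₂ t), g t = T • J ξ) := by

  obtain ⟨hα0, hα1⟩ := hα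
  have h1' : 0 ≤ 1 - α := by linarith
  -- common subgradient a.e.
  have hcommon : ∀ᵐ t : ℝ, ∃ ξ, ξ ∈ subdiff H (γ₁ t) ∧ ξ ∈ subdiff H (γ₂ t) ∧
      g t = T • J ξ := by
    filter_upwards [hmem] with t ⟨⟨ξ₁, hξ₁, he₁⟩, ⟨ξ₂, hξ₂, he₂⟩⟩
    have : ξ₁ = ξ₂ := by
      have hJ : J ξ₁ = J ξ₂ := by
        have := he₁.symm.trans he₂
        have hT' : T ≠ 0 := ne_of_gt hT
        exact smul_right_injective _ hT' this
      have := congrArg J hJ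
      rw [hJ2, hJ2] at this
      exact neg_injective this
    exact ⟨ξ₁, hξ₁, this ▸ hξ₂, he₁⟩
  have hH1 : ∀ t, H (γ₁ t) = 1 := fun t => by
    have := hbd₁ t; rw [← hlevel] at this; exact this
  have hH2 : ∀ t, H (γ₂ t) = 1 := fun t => by
    have := hbd₂ t; rw [← hlevel] at this; exact this
  have hae : ∀ᵐ t : ℝ, H (α • γ₁ t + (1 - α) • γ₂ t) = 1 ∧
      ∃ ξ ∈ subdiff H (α • γ₁ t + (1 - α) • γ₂ t), g t = T • J ξ := by
    filter_upwards [hcommon] with t ⟨ξ, hξ₁, hξ₂, he⟩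
    obtain ⟨heq, hmem'⟩ := subdiff_combo hHconv hξ₁ hξ₂ hα0 hα1
    refine ⟨?_, ξ, hmem', he⟩
    rw [heq, hH1, hH2]; ring
  -- boundary for all t by continuity and density
  have hHcont : Continuous H := by
    have h := hHconv.continuousOn isOpen_univ
    exact continuousOn_univ.mp h
  have hcont : Continuous fun t : ℝ => H (α • γ₁ t + (1 - α) • γ₂ t) :=
    hHcont.comp ((hLip₁.continuous.const_smul α).add (hLip₂.continuous.const_smul (1 - α)))
  have hdense : Dense {t : ℝ | H (α • γ₁ t + (1 - α) • γ₂ t) = 1} :=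
    (MeasureTheory.Measure.dense_of_ae (μ := (volume : Measure ℝ))
      (hae.mono fun t ht => ht.1))
  have hall : ∀ t, H (α • γ₁ t + (1 - α) • γ₂ t) = 1 := by
    have hfun := Continuous.ext_on hdense hcont continuous_const (fun t ht => ht)
    exact fun t => congrFun hfun t
  constructor
  · intro t
    rw [← hlevel]
    exact hall t
  · filter_upwards [hderiv, hae] with t ⟨hd₁, hd₂⟩ ⟨_, hξ⟩
    refine ⟨?_, hξ⟩
    have := (hd₁.const_smul α).add (hd₂.const_smul (1 - α))
    rw [← add_smul, add_sub_cancel, one_smul] at this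
    exact this
end

section
/- Let E = E(a₁,…,a_n) be the ellipsoid {z ∈ ℂ^n : Σ π|z_i|²/a_i ≤ 1} with Gutt–Hutchings capacities c_k^{GH}(E) = M_k(a₁,…,a_n), and let K ⊂ ℝ^{2n} be a convex body with (1/(2n))E ⊆ K ⊆ E. Assuming the capacities are monotone under inclusion and satisfy c_k^{GH}(λE) = λ c_k^{GH}(E) for λ > 0, it follows that c^{GH}_{4n³+1}(K) > c^{GH}_1(K); hence ind_sys^{S¹}(K) = max{i : c_i^{GH}(K) = c_1^{GH}(K)} ≤ 4n³. -/
open Set Pointwise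

/-- Number of pairs `(j, i)` with `j ≥ 1` an integer and `j · a i ≤ r`. -/
noncomputable def countMult (n : ℕ) (a : Fin n → ℝ) (r : ℝ) : ℕ :=
  ∑ i, ⌊r / a i⌋₊

/-- `Mseq n a k`: the `k`-th smallest (with multiplicity) positive integer multiple of the
numbers `a 0, …, a (n-1)`. -/
noncomputable def Mseq (n : ℕ) (a : Fin n → ℝ) (k : ℕ) : ℝ :=
  sInf {r : ℝ | k ≤ countMult n a r}

/-- The ellipsoid `E(a₁,…,a_n) = {z ∈ ℂ^n : Σ π|z_i|²/a_i ≤ 1}`. -/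
def ellipsoid (n : ℕ) (a : Fin n → ℝ) : Set (EuclideanSpace ℂ (Fin n)) :=
  {z | ∑ i, Real.pi * ‖z i‖^2 / a i ≤ 1}

lemma convex_ellipsoid (n : ℕ) (a : Fin n → ℝ) (ha : ∀ i, 0 < a i) :
    Convex ℝ (ellipsoid n a) := by
  intro x hx y hy t s ht hs hts
  simp only [ellipsoid, mem_setOf_eq] at hx hy ⊢
  have key : ∀ i, Real.pi * ‖(t • x + s • y) i‖^2 / a i
      ≤ t * (Real.pi * ‖x i‖^2 / a i) + s * (Real.pi * ‖y i‖^2 / a i) := by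
    intro i
    have hxy : (t • x + s • y) i = t • x i + s • y i := rfl
    have h1 : ‖t • x i + s • y i‖ ≤ t * ‖x i‖ + s * ‖y i‖ := by
      refine (norm_add_le _ _).trans ?_
      rw [norm_smul, norm_smul]
      simp [Real.norm_eq_abs, abs_of_nonneg ht, abs_of_nonneg hs]
    have h2 : ‖t • x i + s • y i‖^2 ≤ t * ‖x i‖^2 + s * ‖y i‖^2 := by
      nlinarith [norm_nonneg (t • x i + s • y i), norm_nonneg (x i), norm_nonneg (y i),
        sq_nonneg (‖x i‖ - ‖y i‖), mul_nonneg ht hs]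
    rw [hxy]
    have e1 : t * (Real.pi * ‖x i‖ ^ 2 / a i) = t * ‖x i‖^2 * (Real.pi / a i) := by ring
    have e2 : s * (Real.pi * ‖y i‖ ^ 2 / a i) = s * ‖y i‖^2 * (Real.pi / a i) := by ring
    have e3 : Real.pi * ‖t • x i + s • y i‖ ^ 2 / a i
        = ‖t • x i + s • y i‖^2 * (Real.pi / a i) := by ring
    rw [e1, e2, e3, ← add_mul]
    exact mul_le_mul_of_nonneg_right h2 (div_nonneg Real.pi_pos.le (ha i).le)
  calc ∑ i, Real.pi * ‖(t • x + s • y) i‖^2 / a i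
      ≤ ∑ i, (t * (Real.pi * ‖x i‖^2 / a i) + s * (Real.pi * ‖y i‖^2 / a i)) :=
        Finset.sum_le_sum fun i _ => key i
    _ = t * ∑ i, Real.pi * ‖x i‖^2 / a i + s * ∑ i, Real.pi * ‖y i‖^2 / a i := by
        rw [Finset.sum_add_distrib, Finset.mul_sum, Finset.mul_sum]
    _ ≤ t * 1 + s * 1 := add_le_add (mul_le_mul_of_nonneg_left hx ht)
        (mul_le_mul_of_nonneg_left hy hs)
    _ = 1 := by linarith

/-- If `(1/(2n))E ⊆ K ⊆ E` for the ellipsoid `E = E(a₁,…,a_n)` whose capacities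
are `c_k(E) = M_k(a₁,…,a_n)`, then—using monotonicity under inclusion and the quadratic scaling
of capacities under dilation—`c_{4n³+1}(K) > c_1(K)`, hence
`ind_sys(K) = max{i : c_i(K) = c_1(K)} ≤ 4n³`. -/
theorem stmt_15 {n : ℕ} (hn : 0 < n) (a : Fin n → ℝ) (ha : ∀ i, 0 < a i)
    (c : ℕ → Set (EuclideanSpace ℂ (Fin n)) → ℝ)
    (hmonotone : ∀ (k : ℕ) (A B : Set (EuclideanSpace ℂ (Fin n))),
      Convex ℝ A → Convex ℝ B → A ⊆ B → c k A ≤ c k B)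
    (hcE : ∀ k : ℕ, 1 ≤ k → c k (ellipsoid n a) = Mseq n a k)
    (hscale : ∀ lam : ℝ, 0 < lam → ∀ k : ℕ,
      c k (lam • ellipsoid n a) = lam^2 * c k (ellipsoid n a))
    (K : Set (EuclideanSpace ℂ (Fin n))) (hKconv : Convex ℝ K) (hKcomp : IsCompact K)
    (hincl₁ : ((1:ℝ)/(2*n)) • ellipsoid n a ⊆ K) (hincl₂ : K ⊆ ellipsoid n a)
    (hmonoK : Monotone fun k => c k K) :
    c 1 K < c (4*n^3 + 1) K ∧ sSup {i : ℕ | 1 ≤ i ∧ c i K = c 1 K} ≤ 4*n^3 := by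
  have hn' : (0:ℝ) < n := by exact_mod_cast hn
  have hne : (Finset.univ : Finset (Fin n)).Nonempty := ⟨⟨0, hn⟩, Finset.mem_univ _⟩
  set m : ℝ := Finset.univ.inf' hne a with hm
  obtain ⟨jm, _, hjm⟩ := Finset.exists_mem_eq_inf' hne a
  have hm_le : ∀ i, m ≤ a i := fun i => Finset.inf'_le _ (Finset.mem_univ i)
  have hmpos : 0 < m := by rw [hm, hjm]; exact ha jm
  have hconvE := convex_ellipsoid n a ha
  -- Fact 1 : Mseq n a 1 ≤ m
  have h1 : Mseq n a 1 ≤ m := by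
    apply csInf_le
    · refine ⟨0, fun r hr => ?_⟩
      by_contra hr0
      push_neg at hr0
      have hz : countMult n a r = 0 := by
        unfold countMult
        apply Finset.sum_eq_zero
        intro i _
        rw [Nat.floor_eq_zero]
        have : r / a i < 0 := div_neg_of_neg_of_pos hr0 (ha i)
        linarith
      simp only [mem_setOf_eq, hz] at hr
      omega
    · show 1 ≤ countMult n a m
      have h1' : 1 ≤ ⌊m / a jm⌋₊ := by
        rw [hm, hjm, div_self (ha jm).ne']
        simp
      exact le_trans h1' (Finset.single_le_sum (f := fun i => ⌊m / a i⌋₊)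
        (fun i _ => Nat.zero_le _) (Finset.mem_univ jm))
  -- Fact 2 : (4n²+1) m ≤ Mseq n a (4n³+1)
  have h2 : ((4*n^2+1 : ℕ) : ℝ) * m ≤ Mseq n a (4*n^3+1) := by
    apply le_csInf
    · refine ⟨((4*n^3+1 : ℕ):ℝ) * a ⟨0, hn⟩, ?_⟩
      show 4*n^3+1 ≤ countMult n a _
      have hfl : ⌊((4*n^3+1:ℕ):ℝ) * a ⟨0, hn⟩ / a ⟨0, hn⟩⌋₊ = 4*n^3+1 := by
        rw [mul_div_assoc, div_self (ha _).ne', mul_one, Nat.floor_natCast]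
      calc 4*n^3+1 = ⌊((4*n^3+1:ℕ):ℝ) * a ⟨0, hn⟩ / a ⟨0, hn⟩⌋₊ := hfl.symm
        _ ≤ countMult n a _ := Finset.single_le_sum
            (f := fun i => ⌊((4*n^3+1:ℕ):ℝ) * a ⟨0, hn⟩ / a i⌋₊)
            (fun i _ => Nat.zero_le _) (Finset.mem_univ (⟨0, hn⟩ : Fin n))
    · intro r hr
      simp only [mem_setOf_eq] at hr
      by_contra hlt
      push_neg at hlt
      have hall : ∀ i, ⌊r / a i⌋₊ ≤ 4*n^2 := by
        intro i
        by_contra hgt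
        push_neg at hgt
        have hge : ((4*n^2+1:ℕ):ℝ) ≤ r / a i := by
          rw [← Nat.le_floor_iff' (by omega)]
          omega
        have hra : ((4*n^2+1:ℕ):ℝ) * a i ≤ r := (le_div_iff₀ (ha i)).mp hge
        have : ((4*n^2+1:ℕ):ℝ) * m ≤ ((4*n^2+1:ℕ):ℝ) * a i :=
          mul_le_mul_of_nonneg_left (hm_le i) (by positivity)
        linarith
      have hub : countMult n a r ≤ n * (4*n^2) := by
        unfold countMult
        calc ∑ i, ⌊r / a i⌋₊ ≤ ∑ _i : Fin n, 4*n^2 :=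
              Finset.sum_le_sum fun i _ => hall i
          _ = n * (4*n^2) := by simp [Finset.sum_const, Finset.card_univ, mul_comm]
      have hc3 : n * (4*n^2) = 4*n^3 := by ring
      omega
  have hlam : (0:ℝ) < 1/(2*n) := by positivity
  have hcK1 : c 1 K ≤ m := by
    calc c 1 K ≤ c 1 (ellipsoid n a) := hmonotone 1 K _ hKconv hconvE hincl₂
      _ = Mseq n a 1 := hcE 1 le_rfl
      _ ≤ m := h1
  have hcKbig : (1/(2*(n:ℝ)))^2 * (((4*n^2+1:ℕ):ℝ) * m) ≤ c (4*n^3+1) K := by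
    calc (1/(2*(n:ℝ)))^2 * (((4*n^2+1:ℕ):ℝ) * m)
        ≤ (1/(2*(n:ℝ)))^2 * Mseq n a (4*n^3+1) :=
          mul_le_mul_of_nonneg_left h2 (by positivity)
      _ = c (4*n^3+1) (((1:ℝ)/(2*n)) • ellipsoid n a) := by
          rw [hscale _ hlam, hcE (4*n^3+1) (by omega)]
      _ ≤ c (4*n^3+1) K := hmonotone _ _ _ (hconvE.smul _) hKconv hincl₁
  have hmid : m < (1/(2*(n:ℝ)))^2 * (((4*n^2+1:ℕ):ℝ) * m) := by
    have hcast : ((4*n^2+1:ℕ):ℝ) = 4*(n:ℝ)^2+1 := by push_cast; ring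
    rw [hcast]
    rw [show (1/(2*(n:ℝ)))^2 = 1/(4*(n:ℝ)^2) by field_simp; ring]
    rw [div_mul_eq_mul_div, one_mul, lt_div_iff₀ (by positivity)]
    nlinarith
  have hlt : c 1 K < c (4*n^3+1) K := lt_of_le_of_lt hcK1 (lt_of_lt_of_le hmid hcKbig)
  refine ⟨hlt, ?_⟩
  refine csSup_le ⟨1, le_rfl, rfl⟩ ?_
  intro i hi
  obtain ⟨hi1, hie⟩ := hi
  by_contra hbig
  push_neg at hbig
  have hle : 4*n^3+1 ≤ i := hbig
  have := hmonoK hle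
  simp only at this
  rw [hie] at this
  linarith
end

section
/- Let K = −K ⊂ ℝ^{2n} be a centrally symmetric convex body and E its Loewner–Behrend–John ellipsoid satisfying (1/√(2n))E ⊆ K ⊆ E. Assuming monotonicity of the Gutt–Hutchings capacities, their scaling law c_k(λE) = λ² c_k(E) for dilation by λ, and c_{ni+1}(E) ≥ (i+1)c_1(E) for ellipsoids, it follows that c^{GH}_{2n²+1}(K) > c^{GH}_1(K), hence ind_sys^{S¹}(K) ≤ 2n². -/
open Set Pointwise

/-!
Monotonicity along `λE ⊆ K ⊆ E` with `λ = 1/√(2n)` gives `c₁(K) ≤ c₁(E)` and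
`c_{2n²+1}(K) ≥ λ² c_{2n²+1}(E) = c_{2n²+1}(E)/(2n)`. The ellipsoid bound with `i = 2n` gives
`c_{2n²+1}(E) ≥ (2n+1) c₁(E)`, so `c_{2n²+1}(K) ≥ (1 + 1/(2n)) c₁(E) > c₁(K)`. Since `k ↦ c_k(K)`
is monotone, no index beyond `2n²` can share the value `c₁(K)`.
-/

theorem Monotone.sSup_setOf_eq_le_of_lt {β : Type*} [Preorder β] {f : ℕ → β} (hf : Monotone f)
    {k m : ℕ} (h : f k < f (m + 1)) : sSup {i : ℕ | k ≤ i ∧ f i = f k} ≤ m := by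
  refine csSup_le' fun i ⟨_, hi⟩ => ?_
  by_contra! hmi
  exact (hf (Nat.succ_le_of_lt hmi)).not_gt (hi ▸ h)

theorem lt_of_smul_subset_of_subset {V : Type*} [AddCommGroup V] [Module ℝ V]
    (c : ℕ → Set V → ℝ) {E K : Set V} (hE : Convex ℝ E) (hK : Convex ℝ K) {lam : ℝ}
    (hin : lam • E ⊆ K) (hout : K ⊆ E)
    (hmono : ∀ (k : ℕ) (A B : Set V), Convex ℝ A → Convex ℝ B → A ⊆ B → c k A ≤ c k B)
    {j m : ℕ} (hscale : c m (lam • E) = lam ^ 2 * c m E) (hgap : c j E < lam ^ 2 * c m E) :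
    c j K < c m K :=
  calc c j K ≤ c j E := hmono j K E hK hE hout
    _ < lam ^ 2 * c m E := hgap
    _ = c m (lam • E) := hscale.symm
    _ ≤ c m K := hmono m _ K (hE.smul lam) hK hin

theorem stmt_16_general {n : ℕ} (hn : 0 < n)
    (c : ℕ → Set (EuclideanSpace ℝ (Fin (2*n))) → ℝ)
    (E K : Set (EuclideanSpace ℝ (Fin (2*n))))
    (hEconv : Convex ℝ E)
    (hKconv : Convex ℝ K)
    (hincl₁ : (Real.sqrt (2*n))⁻¹ • E ⊆ K) (hincl₂ : K ⊆ E)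
    (hmonotone : ∀ (k : ℕ) (A B : Set (EuclideanSpace ℝ (Fin (2*n)))),
      Convex ℝ A → Convex ℝ B → A ⊆ B → c k A ≤ c k B)
    (hscale : ∀ lam : ℝ, 0 < lam → ∀ k : ℕ, c k (lam • E) = lam^2 * c k E)
    (hell : ∀ i : ℕ, ((i : ℝ) + 1) * c 1 E ≤ c (n*i + 1) E)
    (hpos : 0 < c 1 E)
    (hmonoK : Monotone fun k => c k K) :
    c 1 K < c (2*n^2 + 1) K ∧ sSup {i : ℕ | 1 ≤ i ∧ c i K = c 1 K} ≤ 2*n^2 := by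
  have h2n : (0 : ℝ) < 2 * n := by positivity
  have hlam : 0 < (Real.sqrt (2 * n))⁻¹ := by positivity
  have hlam_sq : (Real.sqrt (2 * n))⁻¹ ^ 2 = (2 * n : ℝ)⁻¹ := by
    rw [inv_pow, Real.sq_sqrt h2n.le]
  have hell_2n : (2 * n + 1 : ℝ) * c 1 E ≤ c (2 * n ^ 2 + 1) E := by
    have h := hell (2 * n)
    rwa [show n * (2 * n) + 1 = 2 * n ^ 2 + 1 by ring, Nat.cast_mul, Nat.cast_two] at h
  have hgap : c 1 E < (Real.sqrt (2 * n))⁻¹ ^ 2 * c (2 * n ^ 2 + 1) E := by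
    rw [hlam_sq, inv_mul_eq_div, lt_div_iff₀ h2n]
    nlinarith
  have hlt := lt_of_smul_subset_of_subset c hEconv hKconv hincl₁ hincl₂ hmonotone
    (hscale _ hlam _) hgap
  exact ⟨hlt, hmonoK.sSup_setOf_eq_le_of_lt hlt⟩

/-- For a centrally symmetric convex body `K = −K` with Loewner–Behrend–John
ellipsoid `E` satisfying `(1/√(2n))E ⊆ K ⊆ E`, monotonicity of the capacities, the scaling law
`c_k(λE) = λ²c_k(E)`, and `c_{ni+1}(E) ≥ (i+1)c_1(E)` imply `c_{2n²+1}(K) > c_1(K)`, hence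
`ind_sys(K) ≤ 2n²`. -/
theorem stmt_16 {n : ℕ} (hn : 0 < n)
    (c : ℕ → Set (EuclideanSpace ℝ (Fin (2*n))) → ℝ)
    (E K : Set (EuclideanSpace ℝ (Fin (2*n))))
    (hEconv : Convex ℝ E) (hEcomp : IsCompact E)
    (hKconv : Convex ℝ K) (hKcomp : IsCompact K)
    (hsymm : K = -K)
    (hincl₁ : (Real.sqrt (2*n))⁻¹ • E ⊆ K) (hincl₂ : K ⊆ E)
    (hmonotone : ∀ (k : ℕ) (A B : Set (EuclideanSpace ℝ (Fin (2*n)))),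
      Convex ℝ A → Convex ℝ B → A ⊆ B → c k A ≤ c k B)
    (hscale : ∀ lam : ℝ, 0 < lam → ∀ k : ℕ, c k (lam • E) = lam^2 * c k E)
    (hell : ∀ i : ℕ, ((i : ℝ) + 1) * c 1 E ≤ c (n*i + 1) E)
    (hpos : 0 < c 1 E)
    (hmonoK : Monotone fun k => c k K) :
    c 1 K < c (2*n^2 + 1) K ∧ sSup {i : ℕ | 1 ≤ i ∧ c i K = c 1 K} ≤ 2*n^2 :=
  stmt_16_general hn c E K hEconv hKconv hincl₁ hincl₂ hmonotone hscale hell hpos hmonoK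
end
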